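/- arXiv:2210.00559 — 3 statements merged into one kernel-verified Lean document; each statement's English description precedes it below -/
import Mathlib

section
/- The probability-law map p_n : ▽_n → Δ_n admits a continuous section σ_n : Δ_n → ▽_n, given (identifying Ω with [0,1] with Lebesgue measure) by σ_n(α)(x) = a whenever x ∈ (Σ_{u<a} α(u), Σ_{u≤a} α(u)]. In particular p_n ∘ σ_n = id on Δ_n, and p_n is surjective. -/
/-!
The section sends `α` to the quantile function of `α`, the generalized inverse of its
distribution function `F_α(a) = ∑_{u ≤ a} α u`: it is the least `a` with `x ≤ F_α(a)`. It is
monotone, hence measurable, and on `[0, 1]` it takes the value `a` exactly on the interval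
`(F_α(a) - α a, F_α(a)]` up to an endpoint, so its law is `α`. If the quantile functions of
`α` and `β` differ at `x`, then `x` lies between `F_α(a)` and `F_β(a)` for some `a`; these
`n + 1` intervals have length at most `(n + 1) ‖α - β‖_∞` each, which gives continuity.
-/

open MeasureTheory Set

namespace LawSection

variable {n : ℕ}

noncomputable def sumIic (α : Fin (n + 1) → ℝ) (a : Fin (n + 1)) : ℝ :=
  ∑ u ∈ Finset.univ.filter (fun u => u ≤ a), α u

noncomputable def sumIio (α : Fin (n + 1) → ℝ) (a : Fin (n + 1)) : ℝ :=
  ∑ u ∈ Finset.univ.filter (fun u => u < a), α u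

noncomputable def quantile (α : Fin (n + 1) → ℝ) (x : ℝ) : Fin (n + 1) :=
  if h : (Finset.univ.filter (fun a => x ≤ sumIic α a)).Nonempty then
    (Finset.univ.filter (fun a => x ≤ sumIic α a)).min' h
  else Fin.last n

variable {α β : Fin (n + 1) → ℝ}

lemma sumIic_eq_sumIio_add (a : Fin (n + 1)) : sumIic α a = sumIio α a + α a := by
  have h : Finset.univ.filter (· ≤ a) = insert a (Finset.univ.filter (· < a)) := by
    ext u; simp [le_iff_lt_or_eq, or_comm]
  rw [sumIic, h, Finset.sum_insert (by simp), sumIio, add_comm]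

lemma sumIio_zero : sumIio α 0 = 0 :=
  Finset.sum_eq_zero fun u hu => absurd (Finset.mem_filter.1 hu).2 (Fin.not_lt_zero u)

lemma sumIio_succ (j : Fin n) : sumIio α j.succ = sumIic α j.castSucc := by
  simp only [sumIio, sumIic, Fin.le_castSucc_iff]

lemma sumIic_last : sumIic α (Fin.last n) = ∑ u, α u := by
  simp [sumIic, Fin.le_last]

lemma sumIio_nonneg (hα : 0 ≤ α) (a : Fin (n + 1)) : 0 ≤ sumIio α a :=
  Finset.sum_nonneg fun u _ => hα u

lemma sumIic_mono (hα : 0 ≤ α) : Monotone (sumIic α) := fun _ _ hab =>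
  Finset.sum_le_sum_of_subset_of_nonneg
    (Finset.monotone_filter_right _ fun _ _ hu => le_trans hu hab) fun u _ _ => hα u

lemma sumIic_le_sumIio_of_lt (hα : 0 ≤ α) {a b : Fin (n + 1)} (hab : a < b) :
    sumIic α a ≤ sumIio α b :=
  Finset.sum_le_sum_of_subset_of_nonneg
    (Finset.monotone_filter_right _ fun _ _ hu => lt_of_le_of_lt hu hab) fun u _ _ => hα u

lemma quantile_monotone : Monotone (quantile α) := by
  intro x y hxy
  by_cases hy : (Finset.univ.filter (fun a => y ≤ sumIic α a)).Nonempty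
  · have hsub : Finset.univ.filter (fun a => y ≤ sumIic α a) ⊆
        Finset.univ.filter (fun a => x ≤ sumIic α a) :=
      Finset.monotone_filter_right _ fun _ _ h => hxy.trans h
    rw [quantile, dif_pos (hy.mono hsub), quantile, dif_pos hy]
    exact Finset.min'_subset _ hsub
  · exact (show quantile α y = Fin.last n from dif_neg hy) ▸ Fin.le_last _

lemma measurable_quantile : Measurable (quantile α) :=
  quantile_monotone.measurable

lemma quantile_eq_of_mem_Ioc (hα : 0 ≤ α) {a : Fin (n + 1)} {x : ℝ}
    (hx : x ∈ Ioc (sumIio α a) (sumIic α a)) : quantile α x = a := by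
  have ha : a ∈ Finset.univ.filter (fun b => x ≤ sumIic α b) := by simp [hx.2]
  rw [quantile, dif_pos ⟨a, ha⟩]
  refine le_antisymm (Finset.min'_le _ _ ha) (not_lt.1 fun hlt => ?_)
  have hmin := (Finset.mem_filter.1 (Finset.min'_mem _ ⟨a, ha⟩)).2
  linarith [sumIic_le_sumIio_of_lt hα hlt, hx.1]

lemma mem_Icc_of_quantile_eq {x : ℝ} (h₀ : 0 ≤ x) (h₁ : x ≤ ∑ u, α u) {i : Fin (n + 1)}
    (hi : quantile α x = i) : x ∈ Icc (sumIio α i) (sumIic α i) := by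
  set S := Finset.univ.filter (fun a => x ≤ sumIic α a)
  have hS : S.Nonempty := ⟨Fin.last n, by simp [S, sumIic_last, h₁]⟩
  rw [quantile, dif_pos hS] at hi
  refine ⟨?_, hi ▸ (Finset.mem_filter.1 (S.min'_mem hS)).2⟩
  cases i using Fin.cases with
  | zero => rwa [sumIio_zero]
  | succ j =>
    have hj : j.castSucc ∉ S := fun hj =>
      absurd (hi ▸ S.min'_le _ hj) (not_le.2 j.castSucc_lt_succ)
    simp only [S, Finset.mem_filter, Finset.mem_univ, true_and, not_le] at hj
    rw [sumIio_succ]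
    exact hj.le

lemma volume_quantile_preimage_inter_Icc (hα : 0 ≤ α) (hsum : ∑ u, α u = 1)
    (i : Fin (n + 1)) :
    volume (quantile α ⁻¹' {i} ∩ Icc 0 1) = ENNReal.ofReal (α i) := by
  have hlen : sumIic α i - sumIio α i = α i := by rw [sumIic_eq_sumIio_add]; ring
  apply le_antisymm
  · calc volume (quantile α ⁻¹' {i} ∩ Icc 0 1)
        ≤ volume (Icc (sumIio α i) (sumIic α i)) :=
          measure_mono fun x ⟨hi, hx⟩ => mem_Icc_of_quantile_eq hx.1 (hsum ▸ hx.2) hi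
      _ = ENNReal.ofReal (α i) := by rw [Real.volume_Icc, hlen]
  · calc ENNReal.ofReal (α i)
        = volume (Ioc (sumIio α i) (sumIic α i)) := by rw [Real.volume_Ioc, hlen]
      _ ≤ volume (quantile α ⁻¹' {i} ∩ Icc 0 1) := by
          refine measure_mono fun x hx => ⟨quantile_eq_of_mem_Ioc hα hx, ?_, ?_⟩
          · exact (sumIio_nonneg hα i).trans hx.1.le
          · calc x ≤ sumIic α i := hx.2
              _ ≤ sumIic α (Fin.last n) := sumIic_mono hα (Fin.le_last i)
              _ = 1 := by rw [sumIic_last, hsum]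

lemma quantile_eq_of_forall_le_iff {x : ℝ} (h : ∀ a, x ≤ sumIic α a ↔ x ≤ sumIic β a) :
    quantile α x = quantile β x := by
  simp only [quantile, Finset.filter_congr fun a _ => h a]

lemma setOf_quantile_ne_subset :
    {x | quantile α x ≠ quantile β x} ⊆ ⋃ a, uIcc (sumIic α a) (sumIic β a) := by
  refine fun x hx => by_contra fun hx' => hx (quantile_eq_of_forall_le_iff fun a => ?_)
  have hxa : x ∉ uIcc (sumIic α a) (sumIic β a) := fun h => hx' (mem_iUnion_of_mem a h)
  rw [mem_uIcc, not_or, not_and_or, not_and_or, not_le, not_le, not_le, not_le] at hxa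
  constructor <;> intro <;> rcases hxa with ⟨_ | _, _ | _⟩ <;> linarith

lemma abs_sumIic_sub_le (a : Fin (n + 1)) :
    |sumIic α a - sumIic β a| ≤ (n + 1) * dist α β := by
  rw [sumIic, sumIic, ← Finset.sum_sub_distrib]
  calc |∑ u ∈ Finset.univ.filter (· ≤ a), (α u - β u)|
      ≤ ∑ u ∈ Finset.univ.filter (· ≤ a), |α u - β u| := Finset.abs_sum_le_sum_abs _ _
    _ ≤ ∑ _u ∈ Finset.univ.filter (· ≤ a), dist α β :=
        Finset.sum_le_sum fun u _ => by simpa [Real.dist_eq] using dist_le_pi_dist α β u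
    _ ≤ ∑ _u : Fin (n + 1), dist α β :=
        Finset.sum_le_sum_of_subset_of_nonneg (Finset.filter_subset _ _) fun _ _ _ => dist_nonneg
    _ = (n + 1) * dist α β := by simp

lemma volume_setOf_quantile_ne_le :
    volume {x | quantile α x ≠ quantile β x} ≤ ENNReal.ofReal ((n + 1) ^ 2 * dist α β) :=
  calc volume {x | quantile α x ≠ quantile β x}
      ≤ volume (⋃ a, uIcc (sumIic α a) (sumIic β a)) := measure_mono setOf_quantile_ne_subset
    _ ≤ ∑ a, volume (uIcc (sumIic α a) (sumIic β a)) := measure_iUnion_fintype_le _ _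
    _ ≤ ∑ _a : Fin (n + 1), ENNReal.ofReal ((n + 1) * dist α β) :=
        Finset.sum_le_sum fun a _ => by
          rw [Real.volume_interval, abs_sub_comm]
          exact ENNReal.ofReal_le_ofReal (abs_sumIic_sub_le a)
    _ = ENNReal.ofReal ((n + 1) ^ 2 * dist α β) := by
        rw [Finset.sum_const, Finset.card_univ, Fintype.card_fin, nsmul_eq_mul,
          ← ENNReal.ofReal_natCast, ← ENNReal.ofReal_mul (by positivity)]
        push_cast
        ring_nf

end LawSection

open LawSection

/-- the probability-law map `p_n : ▽_n → Δ_n` admits a continuous section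
`σ_n`, with `σ_n(α)(x) = a` for `x ∈ (Σ_{u<a} α(u), Σ_{u≤a} α(u)]` (here `Ω = [0,1]` with
Lebesgue measure).  In particular `p_n ∘ σ_n = id` and `p_n` is surjective. -/
theorem section_of_law (n : ℕ) :
    ∃ s : stdSimplex ℝ (Fin (n + 1)) → ℝ → Fin (n + 1),
      -- measurability of each σ_n(α)
      (∀ α, Measurable (s α)) ∧
      -- the defining formula
      (∀ (α : stdSimplex ℝ (Fin (n + 1))) (a : Fin (n + 1)) (x : ℝ),
        x ∈ Set.Ioc (∑ u ∈ Finset.univ.filter (fun u => u < a), (α : Fin (n + 1) → ℝ) u)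
              (∑ u ∈ Finset.univ.filter (fun u => u ≤ a), (α : Fin (n + 1) → ℝ) u) →
        s α x = a) ∧
      -- p_n ∘ σ_n = id : the law of σ_n(α) is α
      (∀ (α : stdSimplex ℝ (Fin (n + 1))) (i : Fin (n + 1)),
        (volume.restrict (Set.Icc (0:ℝ) 1)) (s α ⁻¹' {i})
          = ENNReal.ofReal ((α : Fin (n + 1) → ℝ) i)) ∧
      -- continuity of σ_n for the L¹ (probability convergence) metric on ▽_n
      (∀ (α : stdSimplex ℝ (Fin (n + 1))) (ε : ℝ), 0 < ε → ∃ δ : ℝ, 0 < δ ∧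
        ∀ β : stdSimplex ℝ (Fin (n + 1)), dist α β < δ →
          (volume.restrict (Set.Icc (0:ℝ) 1)) {x | s α x ≠ s β x} < ENNReal.ofReal ε) := by
  refine ⟨fun α => quantile α, fun α => measurable_quantile,
    fun α a x hx => quantile_eq_of_mem_Ioc α.2.1 hx, fun α i => ?_, fun α ε hε => ?_⟩
  · rw [Measure.restrict_apply' measurableSet_Icc]
    exact volume_quantile_preimage_inter_Icc α.2.1 α.2.2 i
  · refine ⟨ε / (n + 1) ^ 2, by positivity, fun β hβ => ?_⟩
    calc (volume.restrict (Icc (0:ℝ) 1)) {x | quantile α x ≠ quantile β x}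
        ≤ volume {x | quantile α x ≠ quantile β x} := Measure.restrict_apply_le _ _
      _ ≤ ENNReal.ofReal ((n + 1) ^ 2 * dist α β) := volume_setOf_quantile_ne_le
      _ < ENNReal.ofReal ε :=
        (ENNReal.ofReal_lt_ofReal_iff hε).2 (by rwa [lt_div_iff₀' (by positivity)] at hβ)
end

section
/- For a set S and a topological space X, a map F : X → L¹(Ω, S) is continuous if and only if for every s ∈ S the composition p_s ∘ F : X → 𝔐 is continuous, where p_s(f) = f⁻¹(s) ∈ 𝔐. -/
open MeasureTheory Set

/-- a map `F : X → L¹(Ω,S)` is continuous iff each coordinate map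
`p_s ∘ F : X → 𝔐`, `x ↦ (F x)⁻¹(s)`, is continuous; continuity is expressed via the
metrics `d(f,g) = μ{f ≠ g}` on `L¹(Ω,S)` and `d(U,V) = μ(U Δ V)` on the measure
algebra `𝔐`. -/
theorem continuous_iff_coords {Ω S X : Type*} [MeasurableSpace Ω] (μ : Measure Ω)
    [IsProbabilityMeasure μ] [Countable S] [MeasurableSpace S] [MeasurableSingletonClass S]
    [TopologicalSpace X] (F : X → Ω → S) (hF : ∀ x, Measurable (F x)) :
    (∀ x₀ : X, ∀ ε : ℝ, 0 < ε → ∃ U ∈ nhds x₀, ∀ x ∈ U,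
        μ {t | F x t ≠ F x₀ t} ≤ ENNReal.ofReal ε) ↔
    (∀ s : S, ∀ x₀ : X, ∀ ε : ℝ, 0 < ε → ∃ U ∈ nhds x₀, ∀ x ∈ U,
        μ (symmDiff (F x ⁻¹' {s}) (F x₀ ⁻¹' {s})) ≤ ENNReal.ofReal ε) := by
  constructor
  · intro h s x₀ ε hε
    obtain ⟨U, hU, hU2⟩ := h x₀ ε hε
    refine ⟨U, hU, fun x hx => le_trans (measure_mono ?_) (hU2 x hx)⟩
    intro t ht
    simp only [Set.mem_symmDiff, mem_preimage, mem_singleton_iff] at ht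
    simp only [mem_setOf_eq]
    rcases ht with ⟨h1, h2⟩ | ⟨h1, h2⟩ <;> intro he
    · exact h2 (he ▸ h1)
    · exact h2 (he.trans h1)
  · intro h x₀ ε hε
    set f := F x₀ with hf
    -- tail of the tsum of measures of fibers is small
    have htsum : ∑' s : S, μ (f ⁻¹' {s}) ≠ ⊤ := by
      have : ∑' s : S, μ (f ⁻¹' {s}) = μ (⋃ s : S, f ⁻¹' {s}) := by
        refine (measure_iUnion ?_ (fun s => (hF x₀) (measurableSet_singleton s))).symm
        intro a b hab
        simp only [Function.onFun, Set.disjoint_left]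
        intro t h1 h2
        simp only [mem_preimage, mem_singleton_iff] at h1 h2
        exact hab (h1 ▸ h2 ▸ rfl)
      rw [this]
      exact (measure_lt_top μ _).ne
    have hεpos2 : (0 : ENNReal) < ENNReal.ofReal (ε / 2) := by
      simp [ENNReal.ofReal_pos, half_pos hε]
    obtain ⟨T, hT⟩ := ((tendsto_order.1 (ENNReal.tendsto_tsum_compl_atTop_zero htsum)).2
      _ hεpos2).exists
    -- hT : ∑' (s : {s // s ∉ T}), μ (f ⁻¹' {s}) < ofReal (ε/2)
    set δ := ε / (2 * (T.card + 1)) with hδ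
    have hδpos : 0 < δ := by positivity
    choose V hV hV2 using fun s : S => h s x₀ δ hδpos
    refine ⟨⋂ s ∈ T, V s, (Filter.biInter_finset_mem T).2 fun s _ => hV s, fun x hx => ?_⟩
    simp only [Set.mem_iInter] at hx
    have hsub : {t | F x t ≠ f t} ⊆
        (⋃ s ∈ T, symmDiff (F x ⁻¹' {s}) (f ⁻¹' {s})) ∪ f ⁻¹' ((↑T : Set S)ᶜ) := by
      intro t ht
      by_cases hft : f t ∈ T
      · left
        refine Set.mem_biUnion hft ?_
        rw [Set.mem_symmDiff]
        exact Or.inr ⟨rfl, ht⟩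
      · right; exact hft
    have h1 : μ (f ⁻¹' ((↑T : Set S)ᶜ)) ≤ ENNReal.ofReal (ε / 2) := by
      refine le_trans ?_ hT.le
      have : f ⁻¹' ((↑T : Set S)ᶜ) = ⋃ s : {s : S // s ∉ T}, f ⁻¹' {(s : S)} := by
        ext t
        simp
      rw [this]
      exact measure_iUnion_le _
    have h2 : μ (⋃ s ∈ T, symmDiff (F x ⁻¹' {s}) (f ⁻¹' {s})) ≤ ENNReal.ofReal (ε / 2) := by
      refine le_trans (measure_biUnion_finset_le T _) ?_
      calc ∑ s ∈ T, μ (symmDiff (F x ⁻¹' {s}) (f ⁻¹' {s}))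
          ≤ ∑ _s ∈ T, ENNReal.ofReal δ :=
            Finset.sum_le_sum fun s hs => hV2 s x (hx s hs)
        _ = T.card * ENNReal.ofReal δ := by simp [mul_comm]
        _ ≤ ENNReal.ofReal (ε / 2) := by
            rw [← ENNReal.ofReal_natCast, ← ENNReal.ofReal_mul (Nat.cast_nonneg _)]
            apply ENNReal.ofReal_le_ofReal
            rw [hδ, mul_div_assoc', div_le_div_iff₀ (by positivity) two_pos]
            nlinarith [hε, (Nat.cast_nonneg (α := ℝ) T.card)]
    calc μ {t | F x t ≠ f t}
        ≤ μ ((⋃ s ∈ T, symmDiff (F x ⁻¹' {s}) (f ⁻¹' {s})) ∪ f ⁻¹' ((↑T : Set S)ᶜ)) :=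
          measure_mono hsub
      _ ≤ _ + _ := measure_union_le _ _
      _ ≤ ENNReal.ofReal (ε / 2) + ENNReal.ofReal (ε / 2) := add_le_add h2 h1
      _ = ENNReal.ofReal ε := by
          rw [← ENNReal.ofReal_add (by positivity) (by positivity)]
          ring_nf
end

section
/- Let H₁ : [0,1] × ▽₁ → ▽₁ be defined using the map h(A,u) (with λ(h(A,u)) = u + (1−u)λ(A)) by: Ĥ₁(u,f) takes value 0 on the set (α₀/(u + (1−u)α₀))·h(f⁻¹(0), u) and 1 on its complement, where α₀ = λ(f⁻¹(0)), αᵢ = λ(f⁻¹(i)); then H₁(u,f) = Ĥ₁(u/α₁, f) for u ≤ α₁ and H₁(u,f) = Ĥ₁(1,f) for u > α₁. Then H₁ is a homotopy from the identity of ▽₁ to σ₁ ∘ p₁ which preserves probability laws: p₁(H₁(u,f)) = p₁(f) for all u ∈ [0,1] and f ∈ ▽₁, and H₁(u, σ₁(α)) = σ₁(α) for all α ∈ Δ₁ and u ∈ [0,1]. -/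
open MeasureTheory Set

/-- Lebesgue measure on `Ω = [0,1]`. -/
noncomputable def leb01 : Measure ℝ := volume.restrict (Set.Icc (0:ℝ) 1)

/-!
Write `α₀ = λ(A)`. The set `h(A,v)` has measure `v + (1-v)α₀`, so shrinking it by the factor
`α₀/(v + (1-v)α₀)` brings its measure back to `α₀`; this is why `H₁` preserves laws. At `v = 0`
nothing moves; at `v = 1` one shrinks `h(A,1) = Ω` to `[0,α₀]`; and since both `h` and the action
map initial intervals to initial intervals, `[0,a]` is fixed throughout.

For continuity, the two real parameters `v = min(u/(1-α₀), 1)` and the shrinking factor depend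
continuously on `(u, α₀)` as long as `0 < α₀ < 1`, and the Lipschitz-type estimates on `h` and on
the action turn this into continuity in measure. When `α₀` or `1 - α₀` is small there is nothing to
prove: all sets involved, or all their complements, have small measure.
-/

open Filter Topology
open scoped symmDiff

instance : IsProbabilityMeasure leb01 :=
  ⟨by simp [leb01, Real.volume_Icc]⟩

lemma leb01_real_Icc {a : ℝ} (ha : a ∈ Icc (0 : ℝ) 1) : leb01.real (Icc 0 a) = a := by
  rw [measureReal_def, leb01, Measure.restrict_apply measurableSet_Icc, Icc_inter_Icc,
    max_self, min_eq_left ha.2, Real.volume_Icc, sub_zero, ENNReal.toReal_ofReal ha.1]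

lemma leb01_real_mem_Icc (A : Set ℝ) : leb01.real A ∈ Icc (0 : ℝ) 1 :=
  ⟨measureReal_nonneg, measureReal_le_one⟩

lemma univ_ae_eq_Icc : (univ : Set ℝ) =ᵐ[leb01] Icc 0 1 := by
  refine (ae_eq_univ.2 ?_).symm
  rw [leb01, Measure.restrict_apply measurableSet_Icc.compl, compl_inter_self, measure_empty]

lemma measureReal_symmDiff_le_two_mul_min_add {α : Type*} [MeasurableSpace α] {μ : Measure α}
    [IsProbabilityMeasure μ] {X Y : Set α} (hX : MeasurableSet X) (hY : MeasurableSet Y) :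
    μ.real (X ∆ Y) ≤ 2 * min (μ.real X) (1 - μ.real X) + |μ.real X - μ.real Y| := by
  have hXY := le_abs_self (μ.real X - μ.real Y)
  have hYX := neg_abs_le (μ.real X - μ.real Y)
  have hunion : μ.real (X ∆ Y) ≤ μ.real X + μ.real Y :=
    (measureReal_mono symmDiff_subset_union).trans (measureReal_union_le X Y)
  have hcompl : μ.real (X ∆ Y) ≤ (1 - μ.real X) + (1 - μ.real Y) := by
    rw [← compl_symmDiff_compl, ← probReal_compl_eq_one_sub hX, ← probReal_compl_eq_one_sub hY]
    exact (measureReal_mono symmDiff_subset_union).trans (measureReal_union_le _ _)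
  rw [mul_min_of_nonneg _ _ zero_le_two, ← min_add_add_right]
  exact le_min (by linarith) (by linarith)

lemma toReal_le_four_mul_add_of_le {x y : ENNReal} {r : ℝ} (hy : y ≠ ⊤) (hr : 0 ≤ r)
    (h : x ≤ 4 * y + ENNReal.ofReal r) : x.toReal ≤ 4 * y.toReal + r := by
  refine ENNReal.toReal_le_of_le_ofReal (by positivity) (h.trans_eq ?_)
  rw [ENNReal.ofReal_add (by positivity) hr, ENNReal.ofReal_mul zero_le_four,
    ENNReal.ofReal_toReal hy, ENNReal.ofReal_ofNat]

section Parameters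

variable {u v a : ℝ}

noncomputable def reparam (u a : ℝ) : ℝ := if u ≤ 1 - a then u / (1 - a) else 1

noncomputable def shrinkFactor (v a : ℝ) : ℝ := a / (v + (1 - v) * a)

lemma reparam_mem_Icc (hu : u ∈ Icc (0 : ℝ) 1) (ha : a ≤ 1) : reparam u a ∈ Icc (0 : ℝ) 1 := by
  unfold reparam
  split_ifs with hle
  · exact ⟨div_nonneg hu.1 (by linarith), div_le_one_of_le₀ hle (by linarith)⟩
  · exact ⟨zero_le_one, le_rfl⟩

lemma reparam_zero (ha : a ≤ 1) : reparam 0 a = 0 := by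
  simp [reparam, ha]

lemma reparam_one (ha : 0 ≤ a) : reparam 1 a = 1 := by
  unfold reparam
  split_ifs with hle
  · rw [show a = 0 by linarith, sub_zero, div_one]
  · rfl

lemma reparam_eq_min (ha : a < 1) : reparam u a = min (u / (1 - a)) 1 := by
  have h1a : 0 < 1 - a := by linarith
  unfold reparam
  split_ifs with hle
  · exact (min_eq_left ((div_le_one h1a).2 hle)).symm
  · exact (min_eq_right ((one_le_div h1a).2 (by linarith))).symm

lemma le_add_one_sub_mul (hv : 0 ≤ v) (ha : a ≤ 1) : a ≤ v + (1 - v) * a := by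
  nlinarith

lemma add_one_sub_mul_le_one (hv : v ≤ 1) (ha : a ≤ 1) : v + (1 - v) * a ≤ 1 := by
  nlinarith

lemma shrinkFactor_mul (hv : v ∈ Icc (0 : ℝ) 1) (ha : a ∈ Icc (0 : ℝ) 1) :
    shrinkFactor v a * (v + (1 - v) * a) = a := by
  rcases ha.1.eq_or_lt with rfl | ha0
  · simp [shrinkFactor]
  · exact div_mul_cancel₀ a (ha0.trans_le (le_add_one_sub_mul hv.1 ha.2)).ne'

lemma shrinkFactor_mem_Icc (hv : v ∈ Icc (0 : ℝ) 1) (ha : a ∈ Icc (0 : ℝ) 1) :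
    shrinkFactor v a ∈ Icc (0 : ℝ) 1 :=
  ⟨div_nonneg ha.1 (ha.1.trans (le_add_one_sub_mul hv.1 ha.2)),
    div_le_one_of_le₀ (le_add_one_sub_mul hv.1 ha.2) (ha.1.trans (le_add_one_sub_mul hv.1 ha.2))⟩

lemma continuousAt_reparam (ha : a < 1) :
    ContinuousAt (fun p : ℝ × ℝ => reparam p.1 p.2) (u, a) := by
  have hmin : ContinuousAt (fun p : ℝ × ℝ => min (p.1 / (1 - p.2)) 1) (u, a) :=
    (continuousAt_fst.div (continuousAt_const.sub continuousAt_snd)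
      (sub_ne_zero.2 ha.ne')).min continuousAt_const
  refine hmin.congr ?_
  filter_upwards [continuousAt_snd.eventually (eventually_lt_nhds ha)] with p hp
  exact (reparam_eq_min hp).symm

lemma continuousAt_shrinkFactor_reparam (hu : u ∈ Icc (0 : ℝ) 1) (ha : a ∈ Ioo (0 : ℝ) 1) :
    ContinuousAt (fun p : ℝ × ℝ => shrinkFactor (reparam p.1 p.2) p.2) (u, a) := by
  have hv := reparam_mem_Icc hu ha.2.le
  have hden : reparam u a + (1 - reparam u a) * a ≠ 0 :=
    (ha.1.trans_le (le_add_one_sub_mul hv.1 ha.2.le)).ne'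
  have hrep := continuousAt_reparam (u := u) ha.2
  exact continuousAt_snd.div (hrep.add ((continuousAt_const.sub hrep).mul continuousAt_snd)) hden

end Parameters

/- `Hhat₁ act h v A` and `H₁ act h u A` are the `0`-sets of `Ĥ₁(v,f)` and `H₁(u,f)` for
`A = f⁻¹(0)`. -/
noncomputable def Hhat₁ (act : ℝ → Set ℝ → Set ℝ) (h : Set ℝ → ℝ → Set ℝ) (v : ℝ)
    (A : Set ℝ) : Set ℝ :=
  act (shrinkFactor v (leb01.real A)) (h A v)

noncomputable def H₁ (act : ℝ → Set ℝ → Set ℝ) (h : Set ℝ → ℝ → Set ℝ) (u : ℝ)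
    (A : Set ℝ) : Set ℝ :=
  Hhat₁ act h (reparam u (leb01.real A)) A

section Homotopy

variable {act : ℝ → Set ℝ → Set ℝ} {h : Set ℝ → ℝ → Set ℝ} {A B : Set ℝ} {u v v' : ℝ}

lemma act_congr_ae
    (hactc : ∀ E F, MeasurableSet E → MeasurableSet F → ∀ t ∈ Icc (0:ℝ) 1,
      ∀ t' ∈ Icc (0:ℝ) 1, leb01 (act t E ∆ act t' F) ≤
        4 * leb01 (E ∆ F) + ENNReal.ofReal |t' - t|)
    {E F : Set ℝ} (hE : MeasurableSet E) (hF : MeasurableSet F) {t : ℝ} (ht : t ∈ Icc (0:ℝ) 1)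
    (hEF : E =ᵐ[leb01] F) : act t E =ᵐ[leb01] act t F := by
  rw [← measure_symmDiff_eq_zero_iff] at hEF ⊢
  simpa [hEF] using hactc E F hE hF t ht t ht

lemma measurableSet_Hhat₁
    (hactm : ∀ A, MeasurableSet A → ∀ t ∈ Icc (0:ℝ) 1, MeasurableSet (act t A))
    (hhm : ∀ A, MeasurableSet A → ∀ u ∈ Icc (0:ℝ) 1, MeasurableSet (h A u))
    (hA : MeasurableSet A) (hv : v ∈ Icc (0:ℝ) 1) : MeasurableSet (Hhat₁ act h v A) :=
  hactm _ (hhm A hA v hv) _ (shrinkFactor_mem_Icc hv (leb01_real_mem_Icc A))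

lemma leb01_Hhat₁
    (hactμ : ∀ A, MeasurableSet A → ∀ t ∈ Icc (0:ℝ) 1,
      leb01 (act t A) = ENNReal.ofReal t * leb01 A)
    (hhm : ∀ A, MeasurableSet A → ∀ u ∈ Icc (0:ℝ) 1, MeasurableSet (h A u))
    (hhμ : ∀ A, MeasurableSet A → ∀ u ∈ Icc (0:ℝ) 1,
      leb01 (h A u) = ENNReal.ofReal (u + (1 - u) * (leb01 A).toReal))
    (hA : MeasurableSet A) (hv : v ∈ Icc (0:ℝ) 1) : leb01 (Hhat₁ act h v A) = leb01 A := by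
  have ha := leb01_real_mem_Icc A
  rw [Hhat₁, hactμ _ (hhm A hA v hv) _ (shrinkFactor_mem_Icc hv ha), hhμ A hA v hv,
    ← ENNReal.ofReal_mul (shrinkFactor_mem_Icc hv ha).1, ← measureReal_def,
    shrinkFactor_mul hv ha, ofReal_measureReal]

lemma Hhat₁_zero_ae_eq
    (hact1 : ∀ A, MeasurableSet A → leb01 (act 1 A ∆ A) = 0)
    (hactμ : ∀ A, MeasurableSet A → ∀ t ∈ Icc (0:ℝ) 1,
      leb01 (act t A) = ENNReal.ofReal t * leb01 A)
    (hhm : ∀ A, MeasurableSet A → ∀ u ∈ Icc (0:ℝ) 1, MeasurableSet (h A u))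
    (hh0 : ∀ A, MeasurableSet A → leb01 (h A 0 ∆ A) = 0)
    (hhμ : ∀ A, MeasurableSet A → ∀ u ∈ Icc (0:ℝ) 1,
      leb01 (h A u) = ENNReal.ofReal (u + (1 - u) * (leb01 A).toReal))
    (hA : MeasurableSet A) : Hhat₁ act h 0 A =ᵐ[leb01] A := by
  have h0 : (0 : ℝ) ∈ Icc (0:ℝ) 1 := ⟨le_rfl, zero_le_one⟩
  rcases eq_or_ne (leb01.real A) 0 with hA0 | hA0
  · have hnull : leb01 A = 0 := (measureReal_eq_zero_iff (measure_ne_top _ _)).1 hA0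
    have hHnull : leb01 (Hhat₁ act h 0 A) = 0 := (leb01_Hhat₁ hactμ hhm hhμ hA h0).trans hnull
    exact (ae_eq_empty.2 hHnull).trans (ae_eq_empty.2 hnull).symm
  · have hshrink : shrinkFactor 0 (leb01.real A) = 1 := by simp [shrinkFactor, hA0]
    rw [Hhat₁, hshrink]
    exact (measure_symmDiff_eq_zero_iff.1 (hact1 _ (hhm A hA 0 h0))).trans
      (measure_symmDiff_eq_zero_iff.1 (hh0 A hA))

lemma Hhat₁_one_ae_eq
    (hactI : ∀ b ∈ Icc (0:ℝ) 1, ∀ t ∈ Icc (0:ℝ) 1,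
      leb01 (act t (Icc 0 b) ∆ Icc 0 (t * b)) = 0)
    (hactc : ∀ E F, MeasurableSet E → MeasurableSet F → ∀ t ∈ Icc (0:ℝ) 1,
      ∀ t' ∈ Icc (0:ℝ) 1, leb01 (act t E ∆ act t' F) ≤
        4 * leb01 (E ∆ F) + ENNReal.ofReal |t' - t|)
    (hhm : ∀ A, MeasurableSet A → ∀ u ∈ Icc (0:ℝ) 1, MeasurableSet (h A u))
    (hh1 : ∀ A, MeasurableSet A → leb01 (h A 1 ∆ univ) = 0)
    (hA : MeasurableSet A) : Hhat₁ act h 1 A =ᵐ[leb01] Icc 0 (leb01.real A) := by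
  have ha := leb01_real_mem_Icc A
  have hshrink : shrinkFactor 1 (leb01.real A) = leb01.real A := by simp [shrinkFactor]
  have hIcc : act (leb01.real A) (Icc 0 1) =ᵐ[leb01] Icc 0 (leb01.real A) := by
    simpa using measure_symmDiff_eq_zero_iff.1 (hactI 1 ⟨zero_le_one, le_rfl⟩ _ ha)
  rw [Hhat₁, hshrink]
  refine (act_congr_ae hactc (hhm A hA 1 ⟨zero_le_one, le_rfl⟩) measurableSet_Icc ha ?_).trans hIcc
  exact (measure_symmDiff_eq_zero_iff.1 (hh1 A hA)).trans univ_ae_eq_Icc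

lemma Hhat₁_Icc_ae_eq
    (hactI : ∀ b ∈ Icc (0:ℝ) 1, ∀ t ∈ Icc (0:ℝ) 1,
      leb01 (act t (Icc 0 b) ∆ Icc 0 (t * b)) = 0)
    (hactc : ∀ E F, MeasurableSet E → MeasurableSet F → ∀ t ∈ Icc (0:ℝ) 1,
      ∀ t' ∈ Icc (0:ℝ) 1, leb01 (act t E ∆ act t' F) ≤
        4 * leb01 (E ∆ F) + ENNReal.ofReal |t' - t|)
    (hhm : ∀ A, MeasurableSet A → ∀ u ∈ Icc (0:ℝ) 1, MeasurableSet (h A u))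
    (hhI : ∀ a ∈ Icc (0:ℝ) 1, ∀ u ∈ Icc (0:ℝ) 1,
      leb01 (h (Icc 0 a) u ∆ Icc 0 (u + (1 - u) * a)) = 0)
    {a : ℝ} (ha : a ∈ Icc (0:ℝ) 1) (hv : v ∈ Icc (0:ℝ) 1) :
    Hhat₁ act h v (Icc 0 a) =ᵐ[leb01] Icc 0 a := by
  have hb : v + (1 - v) * a ∈ Icc (0:ℝ) 1 :=
    ⟨ha.1.trans (le_add_one_sub_mul hv.1 ha.2), add_one_sub_mul_le_one hv.2 ha.2⟩
  have ht := shrinkFactor_mem_Icc hv ha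
  have hIcc := measure_symmDiff_eq_zero_iff.1 (hactI _ hb _ ht)
  rw [shrinkFactor_mul hv ha] at hIcc
  rw [Hhat₁, leb01_real_Icc ha]
  exact (act_congr_ae hactc (hhm _ measurableSet_Icc v hv) measurableSet_Icc ht
    (measure_symmDiff_eq_zero_iff.1 (hhI a ha v hv))).trans hIcc

lemma measureReal_Hhat₁_symmDiff_le
    (hactc : ∀ E F, MeasurableSet E → MeasurableSet F → ∀ t ∈ Icc (0:ℝ) 1,
      ∀ t' ∈ Icc (0:ℝ) 1, leb01 (act t E ∆ act t' F) ≤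
        4 * leb01 (E ∆ F) + ENNReal.ofReal |t' - t|)
    (hhm : ∀ A, MeasurableSet A → ∀ u ∈ Icc (0:ℝ) 1, MeasurableSet (h A u))
    (hhc : ∀ E F, MeasurableSet E → MeasurableSet F → ∀ u ∈ Icc (0:ℝ) 1,
      ∀ v ∈ Icc (0:ℝ) 1, leb01 (h E u ∆ h F v) ≤
        4 * leb01 (E ∆ F) + ENNReal.ofReal |v - u|)
    (hA : MeasurableSet A) (hB : MeasurableSet B) (hv : v ∈ Icc (0:ℝ) 1)
    (hv' : v' ∈ Icc (0:ℝ) 1) :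
    leb01.real (Hhat₁ act h v A ∆ Hhat₁ act h v' B) ≤ 16 * leb01.real (A ∆ B) + 4 * |v' - v| +
      |shrinkFactor v' (leb01.real B) - shrinkFactor v (leb01.real A)| := by
  have hhv := toReal_le_four_mul_add_of_le (measure_ne_top _ _) (abs_nonneg _)
    (hhc A B hA hB v hv v' hv')
  have hactv := toReal_le_four_mul_add_of_le (measure_ne_top _ _) (abs_nonneg _)
    (hactc _ _ (hhm A hA v hv) (hhm B hB v' hv') _
      (shrinkFactor_mem_Icc hv (leb01_real_mem_Icc A)) _
      (shrinkFactor_mem_Icc hv' (leb01_real_mem_Icc B)))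
  simp only [Hhat₁, measureReal_def] at hactv ⊢
  linarith

lemma measureReal_H₁_symmDiff_le_two_mul_min_add
    (hactm : ∀ A, MeasurableSet A → ∀ t ∈ Icc (0:ℝ) 1, MeasurableSet (act t A))
    (hactμ : ∀ A, MeasurableSet A → ∀ t ∈ Icc (0:ℝ) 1,
      leb01 (act t A) = ENNReal.ofReal t * leb01 A)
    (hhm : ∀ A, MeasurableSet A → ∀ u ∈ Icc (0:ℝ) 1, MeasurableSet (h A u))
    (hhμ : ∀ A, MeasurableSet A → ∀ u ∈ Icc (0:ℝ) 1,
      leb01 (h A u) = ENNReal.ofReal (u + (1 - u) * (leb01 A).toReal))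
    (hA : MeasurableSet A) (hB : MeasurableSet B) (hu : u ∈ Icc (0:ℝ) 1)
    (hu' : u' ∈ Icc (0:ℝ) 1) :
    leb01.real (H₁ act h u A ∆ H₁ act h u' B) ≤
      2 * min (leb01.real A) (1 - leb01.real A) + leb01.real (A ∆ B) := by
  have hvA := reparam_mem_Icc hu (leb01_real_mem_Icc A).2
  have hvB := reparam_mem_Icc hu' (leb01_real_mem_Icc B).2
  have hlawA : leb01.real (H₁ act h u A) = leb01.real A := by
    rw [measureReal_def, H₁, leb01_Hhat₁ hactμ hhm hhμ hA hvA, measureReal_def]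
  have hlawB : leb01.real (H₁ act h u' B) = leb01.real B := by
    rw [measureReal_def, H₁, leb01_Hhat₁ hactμ hhm hhμ hB hvB, measureReal_def]
  have hbound := measureReal_symmDiff_le_two_mul_min_add (μ := leb01)
    (measurableSet_Hhat₁ hactm hhm hA hvA) (measurableSet_Hhat₁ hactm hhm hB hvB)
  rw [← H₁, ← H₁, hlawA, hlawB] at hbound
  linarith [abs_measureReal_sub_le_measureReal_symmDiff (μ := leb01)
    hA.nullMeasurableSet hB.nullMeasurableSet]


lemma exists_pos_measureReal_H₁_symmDiff_lt
    (hactm : ∀ A, MeasurableSet A → ∀ t ∈ Icc (0:ℝ) 1, MeasurableSet (act t A))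
    (hactμ : ∀ A, MeasurableSet A → ∀ t ∈ Icc (0:ℝ) 1,
      leb01 (act t A) = ENNReal.ofReal t * leb01 A)
    (hactc : ∀ E F, MeasurableSet E → MeasurableSet F → ∀ t ∈ Icc (0:ℝ) 1,
      ∀ t' ∈ Icc (0:ℝ) 1, leb01 (act t E ∆ act t' F) ≤
        4 * leb01 (E ∆ F) + ENNReal.ofReal |t' - t|)
    (hhm : ∀ A, MeasurableSet A → ∀ u ∈ Icc (0:ℝ) 1, MeasurableSet (h A u))
    (hhμ : ∀ A, MeasurableSet A → ∀ u ∈ Icc (0:ℝ) 1,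
      leb01 (h A u) = ENNReal.ofReal (u + (1 - u) * (leb01 A).toReal))
    (hhc : ∀ E F, MeasurableSet E → MeasurableSet F → ∀ u ∈ Icc (0:ℝ) 1,
      ∀ v ∈ Icc (0:ℝ) 1, leb01 (h E u ∆ h F v) ≤
        4 * leb01 (E ∆ F) + ENNReal.ofReal |v - u|)
    (hA : MeasurableSet A) (hu : u ∈ Icc (0:ℝ) 1) {ε : ℝ} (hε : 0 < ε) :
    ∃ δ > 0, ∀ B, MeasurableSet B → ∀ u' ∈ Icc (0:ℝ) 1, leb01.real (A ∆ B) < δ →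
      |u - u'| < δ → leb01.real (H₁ act h u A ∆ H₁ act h u' B) < ε := by
  by_cases hsmall : min (leb01.real A) (1 - leb01.real A) < ε / 3
  · refine ⟨ε / 3, by positivity, fun B hB u' hu' hAB _ => ?_⟩
    linarith [measureReal_H₁_symmDiff_le_two_mul_min_add hactm hactμ hhm hhμ hA hB hu hu']
  obtain ⟨ha0, ha1⟩ := le_min_iff.1 (not_lt.1 hsmall)
  have ha : leb01.real A ∈ Ioo (0:ℝ) 1 := ⟨by linarith, by linarith⟩
  have hnear : ∀ᶠ p : ℝ × ℝ in 𝓝 (u, leb01.real A),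
      dist (reparam p.1 p.2) (reparam u (leb01.real A)) < ε / 12 ∧
        dist (shrinkFactor (reparam p.1 p.2) p.2)
          (shrinkFactor (reparam u (leb01.real A)) (leb01.real A)) < ε / 3 :=
    (Metric.tendsto_nhds.1 (continuousAt_reparam ha.2) _ (by positivity)).and
      (Metric.tendsto_nhds.1 (continuousAt_shrinkFactor_reparam hu ha) _ (by positivity))
  obtain ⟨δ, hδ, hball⟩ := Metric.eventually_nhds_iff.1 hnear
  refine ⟨min δ (ε / 48), by positivity, fun B hB u' hu' hAB huu' => ?_⟩
  have hAB' := lt_min_iff.1 hAB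
  have hlaw := abs_measureReal_sub_le_measureReal_symmDiff (μ := leb01)
    hA.nullMeasurableSet hB.nullMeasurableSet
  obtain ⟨hv, ht⟩ := hball (y := (u', leb01.real B)) <| by
    rw [Prod.dist_eq, Real.dist_eq, Real.dist_eq, abs_sub_comm u', abs_sub_comm _ (leb01.real A)]
    exact max_lt (lt_min_iff.1 huu').1 (by linarith)
  rw [Real.dist_eq] at hv ht
  unfold H₁
  linarith [measureReal_Hhat₁_symmDiff_le hactc hhm hhc hA hB
    (reparam_mem_Icc hu ha.2.le) (reparam_mem_Icc hu' (leb01_real_mem_Icc B).2)]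

end Homotopy

lemma H₁_eq_ite (act : ℝ → Set ℝ → Set ℝ) (h : Set ℝ → ℝ → Set ℝ) :
    H₁ act h = fun (u : ℝ) (A : Set ℝ) =>
      if u ≤ 1 - (leb01 A).toReal then
        act ((leb01 A).toReal /
            (u / (1 - (leb01 A).toReal) +
              (1 - u / (1 - (leb01 A).toReal)) * (leb01 A).toReal))
          (h A (u / (1 - (leb01 A).toReal)))
      else act ((leb01 A).toReal) (h A 1) := by
  funext u A
  by_cases hu : u ≤ 1 - leb01.real A
  · rw [H₁, reparam, if_pos hu, Hhat₁, shrinkFactor]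
    exact (if_pos hu).symm
  · rw [H₁, reparam, if_neg hu, Hhat₁, shrinkFactor, sub_self, zero_mul, add_zero, div_one]
    exact (if_neg hu).symm

/-- identifying `▽₁ ≅ 𝔐` via `f ↦ f⁻¹(0)`, the map
`H₁(u,f) = Ĥ₁(u/α₁, f)` for `u ≤ α₁` and `H₁(u,f) = Ĥ₁(1,f)` for `u > α₁`, where the
`0`-set of `Ĥ₁(u,f)` is `(α₀/(u+(1-u)α₀))·h(f⁻¹(0),u)` (and `α₀ = λ(f⁻¹(0))`,
`α₁ = 1-α₀`), is a homotopy from `id_{▽₁}` to `σ₁ ∘ p₁` which preserves probability laws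
and fixes the image of the section `σ₁` (whose `0`-sets are the intervals `[0,α₀]`).
Here `act` is the retracting action `t·A` of `([0,1],×)` on `𝔐` and `h` is the companion
map, given with their defining properties; all set identities are modulo null sets. -/
theorem homotopy_H1 (act : ℝ → Set ℝ → Set ℝ) (h : Set ℝ → ℝ → Set ℝ)
    -- properties of the retracting action t·A
    (hactm : ∀ A, MeasurableSet A → ∀ t ∈ Set.Icc (0:ℝ) 1, MeasurableSet (act t A))
    (hact1 : ∀ A, MeasurableSet A → leb01 (symmDiff (act 1 A) A) = 0)
    (hactμ : ∀ A, MeasurableSet A → ∀ t ∈ Set.Icc (0:ℝ) 1,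
      leb01 (act t A) = ENNReal.ofReal t * leb01 A)
    (hactI : ∀ b ∈ Set.Icc (0:ℝ) 1, ∀ t ∈ Set.Icc (0:ℝ) 1,
      leb01 (symmDiff (act t (Set.Icc 0 b)) (Set.Icc 0 (t * b))) = 0)
    (hactc : ∀ E F, MeasurableSet E → MeasurableSet F → ∀ t ∈ Set.Icc (0:ℝ) 1,
      ∀ t' ∈ Set.Icc (0:ℝ) 1, leb01 (symmDiff (act t E) (act t' F)) ≤
        4 * leb01 (symmDiff E F) + ENNReal.ofReal |t' - t|)
    -- properties of the companion map h
    (hhm : ∀ A, MeasurableSet A → ∀ u ∈ Set.Icc (0:ℝ) 1, MeasurableSet (h A u))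
    (hh0 : ∀ A, MeasurableSet A → leb01 (symmDiff (h A 0) A) = 0)
    (hh1 : ∀ A, MeasurableSet A → leb01 (symmDiff (h A 1) Set.univ) = 0)
    (hhμ : ∀ A, MeasurableSet A → ∀ u ∈ Set.Icc (0:ℝ) 1,
      leb01 (h A u) = ENNReal.ofReal (u + (1 - u) * (leb01 A).toReal))
    (hhI : ∀ a ∈ Set.Icc (0:ℝ) 1, ∀ u ∈ Set.Icc (0:ℝ) 1,
      leb01 (symmDiff (h (Set.Icc 0 a) u) (Set.Icc 0 (u + (1 - u) * a))) = 0)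
    (hhc : ∀ E F, MeasurableSet E → MeasurableSet F → ∀ u ∈ Set.Icc (0:ℝ) 1,
      ∀ v ∈ Set.Icc (0:ℝ) 1, leb01 (symmDiff (h E u) (h F v)) ≤
        4 * leb01 (symmDiff E F) + ENNReal.ofReal |v - u|) :
    -- the homotopy H₁ (described through the 0-sets of the random variables)
    ∀ H : ℝ → Set ℝ → Set ℝ,
      H = (fun u A =>
        if u ≤ 1 - (leb01 A).toReal then
          act ((leb01 A).toReal /
              (u / (1 - (leb01 A).toReal) +
                (1 - u / (1 - (leb01 A).toReal)) * (leb01 A).toReal))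
            (h A (u / (1 - (leb01 A).toReal)))
        else act ((leb01 A).toReal) (h A 1)) →
      -- H(0,·) is the identity of ▽₁
      (∀ A, MeasurableSet A → leb01 (symmDiff (H 0 A) A) = 0) ∧
      -- H(1,·) is σ₁ ∘ p₁
      (∀ A, MeasurableSet A →
        leb01 (symmDiff (H 1 A) (Set.Icc 0 (leb01 A).toReal)) = 0) ∧
      -- H preserves probability laws
      (∀ A, MeasurableSet A → ∀ u ∈ Set.Icc (0:ℝ) 1, leb01 (H u A) = leb01 A) ∧
      -- H fixes the image of σ₁
      (∀ a ∈ Set.Icc (0:ℝ) 1, ∀ u ∈ Set.Icc (0:ℝ) 1,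
        leb01 (symmDiff (H u (Set.Icc 0 a)) (Set.Icc 0 a)) = 0) ∧
      -- H is continuous
      (∀ A, MeasurableSet A → ∀ u ∈ Set.Icc (0:ℝ) 1, ∀ ε : ℝ, 0 < ε →
        ∃ δ : ℝ, 0 < δ ∧ ∀ B, MeasurableSet B → ∀ u' ∈ Set.Icc (0:ℝ) 1,
          leb01 (symmDiff A B) < ENNReal.ofReal δ → |u - u'| < δ →
            leb01 (symmDiff (H u A) (H u' B)) < ENNReal.ofReal ε) := by
  intro H hH
  obtain rfl : H = H₁ act h := hH.trans (H₁_eq_ite act h).symm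
  have hrep : ∀ {u : ℝ} (A : Set ℝ), u ∈ Icc (0:ℝ) 1 → reparam u (leb01.real A) ∈ Icc (0:ℝ) 1 :=
    fun A hu => reparam_mem_Icc hu (leb01_real_mem_Icc A).2
  refine ⟨fun A hA => ?_, fun A hA => ?_, fun A hA u hu => ?_, fun a ha u hu => ?_,
    fun A hA u hu ε hε => ?_⟩
  · rw [measure_symmDiff_eq_zero_iff, H₁, reparam_zero (leb01_real_mem_Icc A).2]
    exact Hhat₁_zero_ae_eq hact1 hactμ hhm hh0 hhμ hA
  · rw [measure_symmDiff_eq_zero_iff, H₁, reparam_one (leb01_real_mem_Icc A).1]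
    exact Hhat₁_one_ae_eq hactI hactc hhm hh1 hA
  · exact leb01_Hhat₁ hactμ hhm hhμ hA (hrep A hu)
  · rw [measure_symmDiff_eq_zero_iff, H₁]
    exact Hhat₁_Icc_ae_eq hactI hactc hhm hhI ha (hrep _ hu)
  · obtain ⟨δ, hδ, hδH⟩ :=
      exists_pos_measureReal_H₁_symmDiff_lt hactm hactμ hactc hhm hhμ hhc hA hu hε
    refine ⟨δ, hδ, fun B hB u' hu' hAB huu' => ?_⟩
    rw [ENNReal.lt_ofReal_iff_toReal_lt (measure_ne_top _ _)]
    exact hδH B hB u' hu' (ENNReal.toReal_lt_of_lt_ofReal hAB) huu'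
end
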